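/- The [Quote] proof rule is sound for total correctness: if the judgement {A} M :_m {B} is valid, then the judgement {T} ⟨M⟩ :_u {A ⊃ ⟨u⟩↘m.B} is valid. -/
import Mathlib


/-!  A formalization of the meta-programming language PCF_dp (Davies–Pfenning style
quasi-quotation over call-by-value PCF), with small-step reduction, typing with a
modal context, contexts, contextual (pre)congruence, models, and a shallow
semantics for the program logic's formulae and judgements. -/

namespace PCFdp

/-- Types of PCF_dp: base types, functions, and code types `⟨α⟩`. -/
inductive Ty : Type
  | unit | bool | int
  | arrow (a b : Ty)
  | code (a : Ty)
deriving DecidableEq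

/-- Terms of PCF_dp. `quote M` is the quasi-quote `⟨M⟩`, and
`letq x M N` is `let ⟨x⟩ = M in N`. `fix g x α β M` is `μg.λx^α.M`. -/
inductive Tm : Type
  | var (x : ℕ)
  | cunit
  | cbool (b : Bool)
  | cint (n : ℤ)
  | lam (x : ℕ) (α : Ty) (M : Tm)
  | fix (g x : ℕ) (α β : Ty) (M : Tm)
  | app (M N : Tm)
  | add (M N : Tm)
  | ifte (M N N' : Tm)
  | quote (M : Tm)
  | letq (x : ℕ) (M N : Tm)
deriving DecidableEq

/-- Values: constants, abstractions, recursive abstractions, and all quasi-quotes. -/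
inductive IsValue : Tm → Prop
  | cunit : IsValue .cunit
  | cbool (b) : IsValue (.cbool b)
  | cint (n) : IsValue (.cint n)
  | lam (x α M) : IsValue (.lam x α M)
  | fix (g x α β M) : IsValue (.fix g x α β M)
  | quote (M) : IsValue (.quote M)

/-- Substitution `M[N/x]` (substituted terms are closed in all uses below). -/
def subst (x : ℕ) (N : Tm) : Tm → Tm
  | .var y => if y = x then N else .var y
  | .cunit => .cunit
  | .cbool b => .cbool b
  | .cint n => .cint n
  | .lam y α M => if y = x then .lam y α M else .lam y α (subst x N M)
  | .fix g y α β M => if g = x ∨ y = x then .fix g y α β M else .fix g y α β (subst x N M)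
  | .app M M' => .app (subst x N M) (subst x N M')
  | .add M M' => .add (subst x N M) (subst x N M')
  | .ifte M M₁ M₂ => .ifte (subst x N M) (subst x N M₁) (subst x N M₂)
  | .quote M => .quote (subst x N M)
  | .letq y M M' => .letq y (subst x N M) (if y = x then M' else subst x N M')

/-- Call-by-value small-step reduction, with the redexes of PCF plus
`let ⟨x⟩ = ⟨M⟩ in N → N[M/x]`, closed under evaluation contexts. -/
inductive Step : Tm → Tm → Prop
  | beta {x α M V} : IsValue V → Step (.app (.lam x α M) V) (subst x V M)
  | betaFix {g x α β M V} : IsValue V →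
      Step (.app (.fix g x α β M) V) (subst x V (subst g (.fix g x α β M) M))
  | iteT {N N'} : Step (.ifte (.cbool true) N N') N
  | iteF {N N'} : Step (.ifte (.cbool false) N N') N'
  | addC {m n} : Step (.add (.cint m) (.cint n)) (.cint (m + n))
  | letqQ {x M N} : Step (.letq x (.quote M) N) (subst x M N)
  | appL {M M' N} : Step M M' → Step (.app M N) (.app M' N)
  | appR {V N N'} : IsValue V → Step N N' → Step (.app V N) (.app V N')
  | addL {M M' N} : Step M M' → Step (.add M N) (.add M' N)
  | addR {V N N'} : IsValue V → Step N N' → Step (.add V N) (.add V N')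
  | ifteC {M M' N N'} : Step M M' → Step (.ifte M N N') (.ifte M' N N')
  | letqL {x M M' N} : Step M M' → Step (.letq x M N) (.letq x M' N)

/-- Many-step reduction `→*`. -/
def Steps : Tm → Tm → Prop := Relation.ReflTransGen Step

/-- `M ⇓ V`: evaluation to a value. -/
def Evals (M V : Tm) : Prop := Steps M V ∧ IsValue V

/-- `M ⇓`: convergence. -/
def Conv (M : Tm) : Prop := ∃ V, Evals M V

/-- `M ⇑`: divergence. -/
def Div (M : Tm) : Prop := ¬ Conv M

/-- Typing environments: partial maps from variables to types. -/
def Env : Type := ℕ → Option Ty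
def Env.empty : Env := fun _ => none
def Env.update (Γ : Env) (x : ℕ) (α : Ty) : Env := fun y => if y = x then some α else Γ y

/-- The typing judgement `Γ; Δ ⊢ M : α` with non-modal context `Γ` and modal
context `Δ`.  Free variables of quasi-quoted code must be modal; unquote binds
a modal variable. -/
inductive Types : Env → Env → Tm → Ty → Prop
  | varN {Γ Δ : Env} {x α} : Γ x = some α → Types Γ Δ (.var x) α
  | varM {Γ Δ : Env} {x α} : Δ x = some α → Types Γ Δ (.var x) α
  | cunit {Γ Δ} : Types Γ Δ .cunit .unit
  | cbool {Γ Δ b} : Types Γ Δ (.cbool b) .bool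
  | cint {Γ Δ n} : Types Γ Δ (.cint n) .int
  | lam {Γ Δ x α β M} : Types (Env.update Γ x α) Δ M β → Types Γ Δ (.lam x α M) (.arrow α β)
  | fix {Γ Δ g x α β M} :
      Types (Env.update (Env.update Γ g (.arrow α β)) x α) Δ M β →
      Types Γ Δ (.fix g x α β M) (.arrow α β)
  | app {Γ Δ M N α β} : Types Γ Δ M (.arrow α β) → Types Γ Δ N α → Types Γ Δ (.app M N) β
  | add {Γ Δ M N} : Types Γ Δ M .int → Types Γ Δ N .int → Types Γ Δ (.add M N) .int
  | ifte {Γ Δ M N N' α} : Types Γ Δ M .bool → Types Γ Δ N α → Types Γ Δ N' α →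
      Types Γ Δ (.ifte M N N') α
  | quote {Γ Δ M α} : Types Env.empty Δ M α → Types Γ Δ (.quote M) (.code α)
  | letq {Γ Δ x M N α β} : Types Γ Δ M (.code α) → Types Γ (Env.update Δ x α) N β →
      Types Γ Δ (.letq x M N) β

/-- `M` is a closed program of type `α`. -/
def Closed (M : Tm) (α : Ty) : Prop := Types Env.empty Env.empty M α

/-- Term contexts (terms with one hole). -/
inductive Ctx : Type
  | hole
  | lamC (x : ℕ) (α : Ty) (C : Ctx)
  | fixC (g x : ℕ) (α β : Ty) (C : Ctx)
  | appL (C : Ctx) (N : Tm)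
  | appR (M : Tm) (C : Ctx)
  | addL (C : Ctx) (N : Tm)
  | addR (M : Tm) (C : Ctx)
  | ifteC (C : Ctx) (N N' : Tm)
  | ifteL (M : Tm) (C : Ctx) (N' : Tm)
  | ifteR (M N : Tm) (C : Ctx)
  | quoteC (C : Ctx)
  | letqL (x : ℕ) (C : Ctx) (N : Tm)
  | letqR (x : ℕ) (M : Tm) (C : Ctx)

/-- Plugging a term into a context. -/
def Ctx.plug : Ctx → Tm → Tm
  | .hole, M => M
  | .lamC x α C, M => .lam x α (C.plug M)
  | .fixC g x α β C, M => .fix g x α β (C.plug M)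
  | .appL C N, M => .app (C.plug M) N
  | .appR L C, M => .app L (C.plug M)
  | .addL C N, M => .add (C.plug M) N
  | .addR L C, M => .add L (C.plug M)
  | .ifteC C N N', M => .ifte (C.plug M) N N'
  | .ifteL L C N', M => .ifte L (C.plug M) N'
  | .ifteR L N C, M => .ifte L N (C.plug M)
  | .quoteC C, M => .quote (C.plug M)
  | .letqL x C N, M => .letq x (C.plug M) N
  | .letqR x L C, M => .letq x L (C.plug M)

/-- Contextual precongruence `M ≲ N`: for every closing context `C` of type
`Unit` (for both terms), convergence of `C[M]` implies convergence of `C[N]`. -/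
def Prec (M N : Tm) : Prop :=
  ∀ C : Ctx, Closed (C.plug M) .unit → Closed (C.plug N) .unit →
    Conv (C.plug M) → Conv (C.plug N)

/-- Contextual congruence `M ≃ N`, i.e. `≲ ∩ ≲⁻¹`. -/
def Cong (M N : Tm) : Prop := Prec M N ∧ Prec N M

/-- Partial substitutions (used as the two components of a model). -/
def Sub : Type := ℕ → Option Tm
def Sub.remove (ρ : Sub) (x : ℕ) : Sub := fun y => if y = x then none else ρ y
def Sub.update (ρ : Sub) (x : ℕ) (M : Tm) : Sub := fun y => if y = x then some M else ρ y

/-- Simultaneous substitution of (closed) terms for free variables. -/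
def msubst (ρ : Sub) : Tm → Tm
  | .var x => (ρ x).getD (.var x)
  | .cunit => .cunit
  | .cbool b => .cbool b
  | .cint n => .cint n
  | .lam x α M => .lam x α (msubst (ρ.remove x) M)
  | .fix g x α β M => .fix g x α β (msubst ((ρ.remove g).remove x) M)
  | .app M N => .app (msubst ρ M) (msubst ρ N)
  | .add M N => .add (msubst ρ M) (msubst ρ N)
  | .ifte M N N' => .ifte (msubst ρ M) (msubst ρ N) (msubst ρ N')
  | .quote M => .quote (msubst ρ M)
  | .letq x M N => .letq x (msubst ρ M) (msubst (ρ.remove x) N)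

/-- A model of type `Γ; Δ`: `ξ` maps the non-modal variables to closed values of
the right types, `σ` maps the modal variables to closed (possibly diverging)
programs of the right types. -/
structure Model (Γ Δ : Env) : Type where
  ξ : Sub
  σ : Sub
  ξ_dom : ∀ x, (Γ x).isSome ↔ (ξ x).isSome
  ξ_typed : ∀ x α V, Γ x = some α → ξ x = some V → IsValue V ∧ Closed V α
  σ_dom : ∀ x, (Δ x).isSome ↔ (σ x).isSome
  σ_typed : ∀ x α M, Δ x = some α → σ x = some M → Closed M α

/-- The combined substitution `ξ ∪ σ` of a model. -/
def Model.sub {Γ Δ : Env} (η : Model Γ Δ) : Sub :=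
  fun x => match η.ξ x with | some V => some V | none => η.σ x

/-- The closure `Mη` of a term by a model. -/
def Model.close {Γ Δ : Env} (η : Model Γ Δ) (M : Tm) : Tm := msubst η.sub M

/-- Denotation of a variable in a model given as a pair of substitutions. -/
def lookup (ξ σ : Sub) (u : ℕ) : Option Tm :=
  match ξ u with | some V => some V | none => σ u

/-- Formulae of the logic, represented semantically by their satisfaction
predicate on models `(ξ, σ)`. -/
def Form : Type := Sub → Sub → Prop

/-- Semantics of the code-evaluation predicate `⟨u⟩↘m.A`: the denotation of `u`
evaluates to a quasi-quote `⟨M⟩`, `M ⇓ V`, and `A` holds with the modal anchor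
`m` bound to `V`. -/
def CodeEval (u m : ℕ) (A : Form) : Form := fun ξ σ =>
  ∃ U M V, lookup ξ σ u = some U ∧ Evals U (.quote M) ∧ Evals M V ∧ A ξ (σ.update m V)

/-- Validity of the total-correctness judgement `{A} M :_u {B}`
(anchor `u` non-modal). -/
def Valid (Γ Δ : Env) (A : Form) (M : Tm) (u : ℕ) (B : Form) : Prop :=
  ∀ η : Model Γ Δ, A η.ξ η.σ →
    ∃ V, Evals (η.close M) V ∧ B (η.ξ.update u V) η.σ

/-- Validity of a total-correctness judgement whose anchor is placed modally. -/
def ValidM (Γ Δ : Env) (A : Form) (M : Tm) (m : ℕ) (B : Form) : Prop :=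
  ∀ η : Model Γ Δ, A η.ξ η.σ →
    ∃ V, Evals (η.close M) V ∧ B η.ξ (η.σ.update m V)


/-- soundness of the [Quote] rule: if `{A} M :_m {B}` is valid
(inner anchor `m` modal), then `{T} ⟨M⟩ :_u {A ⊃ ⟨u⟩↘m.B}` is valid, where
`u` does not occur in `A` or `B`. -/
theorem quote_rule_sound (Γ Δ : Env) (M : Tm) (m u : ℕ) (A B : Form)
    (hAu : ∀ ξ σ V, A ξ σ ↔ A (Sub.update ξ u V) σ)
    (hBu : ∀ ξ σ V, B ξ σ ↔ B (Sub.update ξ u V) σ)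
    (hprem : ValidM Γ Δ A M m B) :
    Valid Γ Δ (fun _ _ => True) (Tm.quote M) u
      (fun ξ σ => A ξ σ → CodeEval u m B ξ σ) := by
  intro η _
  refine ⟨.quote (η.close M), ⟨Relation.ReflTransGen.refl, IsValue.quote _⟩, ?_⟩
  intro hA
  have hA' : A η.ξ η.σ := (hAu η.ξ η.σ _).mpr hA
  obtain ⟨V', hev, hB⟩ := hprem η hA'
  exact ⟨.quote (η.close M), η.close M, V', by simp [lookup, Sub.update],
    ⟨Relation.ReflTransGen.refl, IsValue.quote _⟩, hev, (hBu _ _ _).mp hB⟩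

end PCFdp
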